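/- arXiv:2505.22968 — 6 statements merged into one kernel-verified Lean document; each statement's English description precedes it below -/
import Mathlib

section
/- Let φ : ℕ × E → E, φ(k,x) = F^k(x), be the flow of a map F : E → E on E ⊆ ℝⁿ with fixed point x*. If x* is stable in the class-K sense (there is a class-K function α with ‖F^k(x) − x*‖ ≤ α(‖x − x*‖) for all k, x), then V(x) := sup_{k∈ℕ} ‖F^k(x) − x*‖ is well-defined, positive definite with respect to x*, and satisfies V(F(x)) ≤ V(x) for all x ∈ E. -/
open NNReal

/-- A class-`𝒦` function: an order-preserving bijection of `ℝ≥0` with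
order-preserving inverse, fixing `0`. -/
def ClassK (α : ℝ≥0 → ℝ≥0) : Prop :=
  Monotone α ∧ Function.Bijective α ∧ Monotone (Function.invFun α) ∧ α 0 = 0

/-- **Converse Lyapunov theorem, discrete time.** If the fixed point `x*` of
`F : E → E` is stable in the class-`𝒦` sense, then
`V x := ⨆ k, ‖F^[k] x - x*‖₊` is well-defined (the supremum is over a bounded
set), positive definite with respect to `x*`, and decrescent: `V (F x) ≤ V x`. -/
theorem discrete_converse_lyapunov {n : ℕ} {E : Set (Fin n → ℝ)} (F : E → E)
    (xs : E) (hfix : F xs = xs)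
    (α : ℝ≥0 → ℝ≥0) (hα : ClassK α)
    (hstab : ∀ (k : ℕ) (x : E),
      ‖((F^[k] x : E) : Fin n → ℝ) - (xs : Fin n → ℝ)‖₊ ≤
        α ‖(x : Fin n → ℝ) - (xs : Fin n → ℝ)‖₊) :
    (∀ x : E, BddAbove (Set.range fun k : ℕ =>
        ‖((F^[k] x : E) : Fin n → ℝ) - (xs : Fin n → ℝ)‖₊)) ∧
    (∃ αl αu : ℝ≥0 → ℝ≥0, ClassK αl ∧ ClassK αu ∧
      ∀ x : E,
        αl ‖(x : Fin n → ℝ) - (xs : Fin n → ℝ)‖₊ ≤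
          (⨆ k : ℕ, ‖((F^[k] x : E) : Fin n → ℝ) - (xs : Fin n → ℝ)‖₊) ∧
        (⨆ k : ℕ, ‖((F^[k] x : E) : Fin n → ℝ) - (xs : Fin n → ℝ)‖₊) ≤
          αu ‖(x : Fin n → ℝ) - (xs : Fin n → ℝ)‖₊) ∧
    (∀ x : E,
      (⨆ k : ℕ, ‖((F^[k] (F x) : E) : Fin n → ℝ) - (xs : Fin n → ℝ)‖₊) ≤
        ⨆ k : ℕ, ‖((F^[k] x : E) : Fin n → ℝ) - (xs : Fin n → ℝ)‖₊) := by
  have hbdd : ∀ x : E, BddAbove (Set.range fun k : ℕ =>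
      ‖((F^[k] x : E) : Fin n → ℝ) - (xs : Fin n → ℝ)‖₊) := by
    intro x
    exact ⟨α ‖(x : Fin n → ℝ) - (xs : Fin n → ℝ)‖₊,
      by rintro _ ⟨k, rfl⟩; exact hstab k x⟩
  have hid : ClassK (id : ℝ≥0 → ℝ≥0) := by
    refine ⟨monotone_id, Function.bijective_id, ?_, rfl⟩
    have : Function.invFun (id : ℝ≥0 → ℝ≥0) = id := by
      funext y
      exact Function.leftInverse_invFun Function.injective_id y
    rw [this]; exact monotone_id
  refine ⟨hbdd, ⟨id, α, hid, hα, fun x => ?_⟩, fun x => ?_⟩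
  · constructor
    · have := le_ciSup (hbdd x) 0
      simpa using this
    · exact ciSup_le fun k => hstab k x
  · refine ciSup_le fun k => ?_
    have : F^[k] (F x) = F^[k + 1] x := (Function.iterate_succ_apply F k x).symm
    rw [this]
    exact le_ciSup (hbdd x) (k + 1)
end

section
/- In a monoidal setting for dynamic stability with compatible unit clock, for every object X, the map ⊕ × id_X : T × T × X → T × X is a morphism of F-coalgebras from L_{T×X} to L_X, where L_Y := ψ_{T,Y} ∘ (1_T × 0_Y); consequently the derivative of the flow ⊕ × id_X equals L_X. -/
/-!
Since `0_{T ⨯ X} = ψ ∘ (0_T × 0_X)`, associativity of `ψ` identifies `L_{T ⨯ X}`, up to the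
associator, with the product coalgebra `L_T × 0_X`. Naturality of `ψ` then carries the clock
compatibility `F(⊕) ∘ L_T = 1_T ∘ ⊕` over to `⊕ × id_X`. Because `0_⊕` is a left unit, the initial
condition of this flow is the identity, so its derivative is the coalgebra `L_X` it maps into.
-/

open CategoryTheory CategoryTheory.Limits

universe v u

/-- The data of a monoidal setting for dynamic stability, without the monoid
structure on the time object: an endofunctor `F` with a laxator `ψ` (axiom D5),
stationary systems `0` (axiom D6), a time object `T` with a distinguished point
`e = 0_⊕` and a unit-clock coalgebra `1_T : T ⟶ F T`. -/
structure PreSetting (C : Type u) [Category.{v} C] [HasFiniteProducts C] where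
  /-- the endofunctor -/
  F : C ⥤ C
  /-- the laxator (axiom D5) -/
  ψ : ∀ A B : C, F.obj A ⨯ F.obj B ⟶ F.obj (A ⨯ B)
  ψ_nat : ∀ {A A' B B' : C} (u : A ⟶ A') (w : B ⟶ B'),
    prod.map (F.map u) (F.map w) ≫ ψ A' B' = ψ A B ≫ F.map (prod.map u w)
  ψ_assoc : ∀ A B D : C,
    prod.map (ψ A B) (𝟙 (F.obj D)) ≫ ψ (A ⨯ B) D ≫
        F.map (prod.associator A B D).hom =
      (prod.associator (F.obj A) (F.obj B) (F.obj D)).hom ≫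
        prod.map (𝟙 (F.obj A)) (ψ B D) ≫ ψ A (B ⨯ D)
  /-- stationary systems (axiom D6) -/
  z : ∀ A : C, A ⟶ F.obj A
  z_nat : ∀ {A B : C} (u : A ⟶ B), z A ≫ F.map u = u ≫ z B
  z_mul : ∀ A B : C, prod.map (z A) (z B) ≫ ψ A B = z (A ⨯ B)
  /-- the time object -/
  T : C
  /-- the point `0_⊕` of the time object -/
  e : ⊤_ C ⟶ T
  /-- the unit clock coalgebra -/
  oneT : T ⟶ F.obj T

namespace PreSetting

variable {C : Type u} [Category.{v} C] [HasFiniteProducts C] (S : PreSetting C)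

/-- The coalgebra `L_X := ψ_{T,X} ∘ (1_T × 0_X) : T ⨯ X ⟶ F (T ⨯ X)`. -/
noncomputable def L (X : C) : S.T ⨯ X ⟶ S.F.obj (S.T ⨯ X) :=
  prod.map S.oneT (S.z X) ≫ S.ψ S.T X

/-- The initial-condition inclusion `0_⊕ × id_X : X ⟶ T ⨯ X`. -/
noncomputable def ins (X : C) : X ⟶ S.T ⨯ X :=
  prod.lift (terminal.from X ≫ S.e) (𝟙 X)

/-- `p` is a morphism of `F`-coalgebras from `(A, f)` to `(B, g)`. -/
def IsCoalgHom {A B : C} (f : A ⟶ S.F.obj A) (g : B ⟶ S.F.obj B)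
    (p : A ⟶ B) : Prop :=
  f ≫ S.F.map p = p ≫ g

/-- The derivative of a flow `φ : T ⨯ E ⟶ E`:
`Dφ := Fφ ∘ L_E ∘ (0_⊕ × id_E)`. -/
noncomputable def deriv {E : C} (φ : S.T ⨯ E ⟶ E) : E ⟶ S.F.obj E :=
  S.ins E ≫ S.L E ≫ S.F.map φ

/-- `T`-completeness of a coalgebra `(A, f)`: every `g : B ⟶ A` extends to a
unique coalgebra morphism `γ : L_B ⟶ f` with initial condition `g`. -/
def TComplete {A : C} (f : A ⟶ S.F.obj A) : Prop :=
  ∀ {B : C} (g : B ⟶ A), ∃! γ : S.T ⨯ B ⟶ A,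
    S.IsCoalgHom (S.L B) f γ ∧ S.ins B ≫ γ = g

end PreSetting

/-- A monoidal setting for dynamic stability: a `PreSetting` together with a
monoid structure `(T, ⊕, 0_⊕)` on the time object. -/
structure DynSetting (C : Type u) [Category.{v} C] [HasFiniteProducts C]
    extends PreSetting C where
  /-- the monoid operation `⊕` on the time object -/
  mul : T ⨯ T ⟶ T
  mul_one : prod.lift (𝟙 T) (terminal.from T ≫ e) ≫ mul = 𝟙 T
  one_mul : prod.lift (terminal.from T ≫ e) (𝟙 T) ≫ mul = 𝟙 T
  mul_assoc : (prod.associator T T T).inv ≫ prod.map mul (𝟙 T) ≫ mul =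
    prod.map (𝟙 T) mul ≫ mul

namespace DynSetting

variable {C : Type u} [Category.{v} C] [HasFiniteProducts C] (S : DynSetting C)

/-- `φ : T ⨯ E ⟶ E` is a `T`-flow (monoid action). -/
def IsFlow {E : C} (φ : S.T ⨯ E ⟶ E) : Prop :=
  S.ins E ≫ φ = 𝟙 E ∧
    prod.map (𝟙 S.T) φ ≫ φ =
      (prod.associator S.T S.T E).inv ≫ prod.map S.mul (𝟙 E) ≫ φ

/-- Compatibility of the unit clock with the monoid structure:
`F(⊕) ∘ L_T = 1_T ∘ ⊕`. -/
def ClockCompat : Prop :=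
  S.L S.T ≫ S.F.map S.mul = S.mul ≫ S.oneT

end DynSetting

theorem CategoryTheory.Limits.prod.associator_inv_naturality {C : Type u} [Category.{v} C]
    [HasBinaryProducts C] {X₁ X₂ X₃ Y₁ Y₂ Y₃ : C} (f₁ : X₁ ⟶ Y₁) (f₂ : X₂ ⟶ Y₂)
    (f₃ : X₃ ⟶ Y₃) :
    prod.map f₁ (prod.map f₂ f₃) ≫ (prod.associator Y₁ Y₂ Y₃).inv =
      (prod.associator X₁ X₂ X₃).inv ≫ prod.map (prod.map f₁ f₂) f₃ := by
  rw [Iso.eq_inv_comp, ← prod.associator_naturality_assoc, Iso.hom_inv_id, Category.comp_id]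

namespace PreSetting

variable {C : Type u} [Category.{v} C] [HasFiniteProducts C] (S : PreSetting C)

theorem ψ_assoc_inv (A B D : C) :
    prod.map (𝟙 (S.F.obj A)) (S.ψ B D) ≫ S.ψ A (B ⨯ D) ≫
        S.F.map (prod.associator A B D).inv =
      (prod.associator (S.F.obj A) (S.F.obj B) (S.F.obj D)).inv ≫
        prod.map (S.ψ A B) (𝟙 (S.F.obj D)) ≫ S.ψ (A ⨯ B) D := by
  rw [Iso.eq_inv_comp, ← reassoc_of% S.ψ_assoc, ← S.F.map_comp, Iso.hom_inv_id, S.F.map_id,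
    Category.comp_id]

/-- Up to the associator, `L_{T ⨯ X}` is the product coalgebra `L_T × 0_X`. -/
theorem L_prod_comp_map_associator_inv (X : C) :
    S.L (S.T ⨯ X) ≫ S.F.map (prod.associator S.T S.T X).inv =
      (prod.associator S.T S.T X).inv ≫ prod.map (S.L S.T) (S.z X) ≫ S.ψ (S.T ⨯ S.T) X := by
  have hz : prod.map S.oneT (S.z (S.T ⨯ X)) =
      prod.map S.oneT (prod.map (S.z S.T) (S.z X)) ≫ prod.map (𝟙 _) (S.ψ S.T X) := by
    rw [prod.map_map, Category.comp_id, S.z_mul]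
  rw [PreSetting.L, PreSetting.L, hz, Category.assoc, Category.assoc, ψ_assoc_inv,
    reassoc_of% prod.associator_inv_naturality, prod.map_map_assoc, Category.comp_id]

theorem isCoalgHom_associator_inv_map {m : S.T ⨯ S.T ⟶ S.T}
    (hm : S.IsCoalgHom (S.L S.T) S.oneT m) (X : C) :
    S.IsCoalgHom (S.L (S.T ⨯ X)) (S.L X)
      ((prod.associator S.T S.T X).inv ≫ prod.map m (𝟙 X)) := by
  calc S.L (S.T ⨯ X) ≫ S.F.map ((prod.associator S.T S.T X).inv ≫ prod.map m (𝟙 X))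
      = (prod.associator S.T S.T X).inv ≫ prod.map (S.L S.T) (S.z X) ≫
          S.ψ (S.T ⨯ S.T) X ≫ S.F.map (prod.map m (𝟙 X)) := by
        rw [S.F.map_comp, reassoc_of% S.L_prod_comp_map_associator_inv]
    _ = (prod.associator S.T S.T X).inv ≫
          prod.map (S.L S.T ≫ S.F.map m) (S.z X) ≫ S.ψ S.T X := by
        rw [← S.ψ_nat, S.F.map_id, prod.map_map_assoc, Category.comp_id]
    _ = ((prod.associator S.T S.T X).inv ≫ prod.map m (𝟙 X)) ≫ S.L X := by
        rw [show S.L S.T ≫ S.F.map m = m ≫ S.oneT from hm, PreSetting.L, Category.assoc,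
          prod.map_map_assoc, Category.id_comp]

theorem ins_prod_comp_associator_inv (A X : C) :
    S.ins (A ⨯ X) ≫ (prod.associator S.T A X).inv = prod.map (S.ins A) (𝟙 X) := by
  ext <;> simp [PreSetting.ins, prod.lift_fst, prod.lift_snd, ← Category.assoc,
    terminal.comp_from]

theorem deriv_eq_of_isCoalgHom {E : C} {φ : S.T ⨯ E ⟶ E} {g : E ⟶ S.F.obj E}
    (hφ : S.IsCoalgHom (S.L E) g φ) (hins : S.ins E ≫ φ = 𝟙 E) : S.deriv φ = g := by
  rw [PreSetting.deriv, show S.L E ≫ S.F.map φ = φ ≫ g from hφ, reassoc_of% hins]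

end PreSetting

theorem DynSetting.ins_comp_mul {C : Type u} [Category.{v} C] [HasFiniteProducts C]
    (S : DynSetting C) : S.ins S.T ≫ S.mul = 𝟙 S.T :=
  S.one_mul

/-- **The monoid operation is a coalgebra morphism `L_{T×X} ⟶ L_X`.** In a
monoidal setting for dynamic stability whose unit clock is compatible with the
monoid structure (`F(⊕) ∘ L_T = 1_T ∘ ⊕`), for every object `X` the map
`⊕ × id_X : T ⨯ (T ⨯ X) ⟶ T ⨯ X` (up to the associator) is a morphism of
`F`-coalgebras `L_{T ⨯ X} ⟶ L_X`; consequently its derivative as a flow on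
`T ⨯ X` is `L_X`. -/
theorem mul_id_coalgHom_and_deriv {C : Type u} [Category.{v} C]
    [HasFiniteProducts C] (S : DynSetting C) (hcc : S.ClockCompat) (X : C) :
    S.toPreSetting.IsCoalgHom (S.L (S.T ⨯ X)) (S.L X)
        ((prod.associator S.T S.T X).inv ≫ prod.map S.mul (𝟙 X)) ∧
      S.toPreSetting.deriv
          ((prod.associator S.T S.T X).inv ≫ prod.map S.mul (𝟙 X)) = S.L X := by
  have hom := S.isCoalgHom_associator_inv_map hcc X
  refine ⟨hom, S.deriv_eq_of_isCoalgHom hom ?_⟩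
  rw [reassoc_of% S.ins_prod_comp_associator_inv, prod.map_map, S.ins_comp_mul, Category.id_comp,
    prod.map_id_id]
end

section
/- If L_X is T-complete for every object X (equivalently D(⊕ × id) is always T-complete), then the functor L : C → T-Sys_F (sending X to the coalgebra L_X) is left adjoint to the forgetful functor U : T-Sys_F → C, with unit of the adjunction given by 0_⊕ × id_B : B → T × B. -/
open CategoryTheory CategoryTheory.Limits

universe v u

/-
`T`-completeness of `(A, f)` says precisely that every `g : B ⟶ A` factors uniquely through
`0_⊕ × id_B : B ⟶ T ⨯ B` via a coalgebra morphism out of `L_B`; that is, `0_⊕ × id_B` is a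
universal arrow from `B` to the forgetful functor on `T`-complete coalgebras. When every `L_B`
is itself `T`-complete, these universal arrows assemble into a left adjoint with this unit.
-/

namespace PreSetting

variable {C : Type*} [Category C] [HasFiniteProducts C] (S : PreSetting C)

noncomputable abbrev freeCoalgebra (B : C) : Endofunctor.Coalgebra S.F :=
  ⟨S.T ⨯ B, S.L B⟩

variable {S}

noncomputable def TComplete.homEquiv {A : Endofunctor.Coalgebra S.F} (hA : S.TComplete A.str)
    (B : C) : (S.freeCoalgebra B ⟶ A) ≃ (B ⟶ A.V) where
  toFun γ := S.ins B ≫ γ.f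
  invFun g := ⟨(hA g).choose, (hA g).choose_spec.1.1⟩
  left_inv γ := Endofunctor.Coalgebra.Hom.ext ((hA _).unique (hA _).choose_spec.1 ⟨γ.h, rfl⟩)
  right_inv g := (hA g).choose_spec.1.2

theorem TComplete.homEquiv_comp {A A' : Endofunctor.Coalgebra S.F} (hA : S.TComplete A.str)
    (hA' : S.TComplete A'.str) {B : C} (γ : S.freeCoalgebra B ⟶ A) (δ : A ⟶ A') :
    hA'.homEquiv B (γ ≫ δ) = hA.homEquiv B γ ≫ δ.f :=
  (Category.assoc _ _ _).symm

end PreSetting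

/-- **The free–forgetful adjunction `L ⊣ U`.** If `L_X` is `T`-complete for
every object `X`, then the functor `L : C ⥤ T‑Sys_F` sending `X` to the
coalgebra `L_X` on `T ⨯ X` is left adjoint to the forgetful functor
`U : T‑Sys_F ⥤ C` from the full subcategory of `T`-complete coalgebras, with
the unit of the adjunction given by `0_⊕ × id_B : B ⟶ T ⨯ B`. -/
theorem L_left_adjoint_forget {C : Type u} [Category.{v} C]
    [HasFiniteProducts C] (S : PreSetting C)
    (hLcomp : ∀ X : C, S.TComplete (S.L X)) :
    ∃ (Lf : C ⥤ ObjectProperty.FullSubcategory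
        (fun A : Endofunctor.Coalgebra S.F => S.TComplete A.str))
      (adj : Lf ⊣ ObjectProperty.ι _ ⋙ Endofunctor.Coalgebra.forget S.F),
      (∀ X : C, Lf.obj X = ⟨⟨S.T ⨯ X, S.L X⟩, hLcomp X⟩) ∧
      ∀ B : C, HEq (adj.unit.app B) (S.ins B) := by
  let e (X : C) (Y : ObjectProperty.FullSubcategory
      (fun A : Endofunctor.Coalgebra S.F => S.TComplete A.str)) :
      (⟨S.freeCoalgebra X, hLcomp X⟩ ⟶ Y) ≃
        (X ⟶ (ObjectProperty.ι _ ⋙ Endofunctor.Coalgebra.forget S.F).obj Y) :=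
    (ObjectProperty.fullyFaithfulι _).homEquiv.trans (PreSetting.TComplete.homEquiv Y.property X)
  have he : ∀ X Y Y' g h, e X Y' (h ≫ g) = e X Y h ≫ g.hom.f := fun X Y Y' g h =>
    PreSetting.TComplete.homEquiv_comp Y.property Y'.property h.hom g.hom
  exact ⟨Adjunction.leftAdjointOfEquiv e he, Adjunction.adjunctionOfEquivLeft e he,
    fun X => rfl, fun B => heq_of_eq (Category.comp_id (S.ins B))⟩
end

section
/- Let f : A → FA and g : B → FB be T-complete F-coalgebras with solution flows ∫f : T × A → A and ∫g : T × B → B (the unique coalgebra morphisms L_A → f, L_B → g with identity initial condition). If p : A → B is a morphism of F-coalgebras f → g, then p is a morphism of T-flows: p ∘ ∫f = ∫g ∘ (id_T × p). -/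
open CategoryTheory CategoryTheory.Limits

universe v u

/-- **Coalgebra morphisms between `T`-complete systems are flow morphisms.**
Let `f : A ⟶ F A` and `g : B ⟶ F B` be `T`-complete coalgebras, with solution
flows `∫f` and `∫g` (the unique coalgebra morphisms `L_A ⟶ f`, `L_B ⟶ g` with
identity initial condition).  If `p : A ⟶ B` is a morphism of `F`-coalgebras
`f ⟶ g`, then `p` is a morphism of `T`-flows: `p ∘ ∫f = ∫g ∘ (id_T × p)`. -/
theorem coalgHom_is_flowHom {C : Type u} [Category.{v} C]
    [HasFiniteProducts C] (S : PreSetting C)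
    (hclock : S.TComplete S.oneT)
    {A B : C} (f : A ⟶ S.F.obj A) (g : B ⟶ S.F.obj B)
    (hf : S.TComplete f) (hg : S.TComplete g)
    (intf : S.T ⨯ A ⟶ A) (intg : S.T ⨯ B ⟶ B)
    (hintf : S.IsCoalgHom (S.L A) f intf ∧ S.ins A ≫ intf = 𝟙 A)
    (hintg : S.IsCoalgHom (S.L B) g intg ∧ S.ins B ≫ intg = 𝟙 B)
    (p : A ⟶ B) (hp : S.IsCoalgHom f g p) :
    intf ≫ p = prod.map (𝟙 S.T) p ≫ intg := by
  obtain ⟨γ, -, huniq⟩ := hg p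
  have hL : S.L A ≫ S.F.map (prod.map (𝟙 S.T) p) = prod.map (𝟙 S.T) p ≫ S.L B := by
    have hnat := S.ψ_nat (𝟙 S.T) p
    unfold PreSetting.L
    rw [Category.assoc, ← hnat, ← Category.assoc, ← Category.assoc,
      prod.map_map, prod.map_map, S.F.map_id, Category.id_comp,
      Category.comp_id, S.z_nat p]
  have h1 : intf ≫ p = γ := by
    apply huniq
    constructor
    · unfold PreSetting.IsCoalgHom at *
      rw [S.F.map_comp, ← Category.assoc, hintf.1, Category.assoc, hp,
        ← Category.assoc]
    · rw [← Category.assoc, hintf.2, Category.id_comp]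
  have h2 : prod.map (𝟙 S.T) p ≫ intg = γ := by
    apply huniq
    constructor
    · unfold PreSetting.IsCoalgHom at *
      rw [S.F.map_comp, ← Category.assoc, hL, Category.assoc, hintg.1,
        ← Category.assoc]
    · have hins : S.ins A ≫ prod.map (𝟙 S.T) p = p ≫ S.ins B := by
        unfold PreSetting.ins
        rw [prod.lift_map, prod.comp_lift]
        congr 1
        · rw [Category.comp_id, ← Category.assoc]
          congr 1
          exact Subsingleton.elim _ _
        · rw [Category.id_comp, Category.comp_id]
      rw [← Category.assoc, hins, Category.assoc, hintg.2, Category.comp_id]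
  rw [h1, h2]
end

section
/- In a converse setting for stability, let f : E → FE be an F-coalgebra with solution flow φ : T × E → E (so Dφ = f and φ is a coalgebra morphism L_E → f). If x* : 1 → E is an equilibrium point of the flow φ (φ ∘ (id_T × x*) = x* ∘ !), then x* is a coalgebraic equilibrium: f ∘ x* = F(x*) ∘ 0₁. Conversely, if f is T-complete and f ∘ x* = F(x*) ∘ 0₁, then x* is an equilibrium point of ∫f. -/
open CategoryTheory CategoryTheory.Limits

universe v u

/-- A converse setting for stability: a monoidal setting for dynamic stability
in which the stationary system `0₁ : 1 ⟶ F 1` is neutral for the laxator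
(axiom D7, making `F` lax monoidal and `0` a monoidal natural transformation)
and `0₁` is `T`-complete (axiom D8). -/
structure ConvSetting (C : Type u) [Category.{v} C] [HasFiniteProducts C]
    extends DynSetting C where
  d7_left : ∀ X : C,
    prod.map (z (⊤_ C)) (𝟙 (F.obj X)) ≫ ψ (⊤_ C) X ≫
        F.map (prod.leftUnitor X).hom = (prod.leftUnitor (F.obj X)).hom
  d7_right : ∀ X : C,
    prod.map (𝟙 (F.obj X)) (z (⊤_ C)) ≫ ψ X (⊤_ C) ≫
        F.map (prod.rightUnitor X).hom = (prod.rightUnitor (F.obj X)).hom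
  d8 : toPreSetting.TComplete (z (⊤_ C))

section Aux

variable {C : Type u} [Category.{v} C] [HasFiniteProducts C]

lemma PreSetting.L_nat (S : PreSetting C) {A B : C} (u : A ⟶ B) :
    prod.map (𝟙 S.T) u ≫ S.L B = S.L A ≫ S.F.map (prod.map (𝟙 S.T) u) := by
  have h := S.ψ_nat (𝟙 S.T) u
  simp only [CategoryTheory.Functor.map_id] at h
  calc prod.map (𝟙 S.T) u ≫ S.L B
      = prod.map (𝟙 S.T ≫ S.oneT) (u ≫ S.z B) ≫ S.ψ S.T B := by
        unfold L; rw [← Category.assoc, prod.map_map]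
    _ = prod.map (S.oneT ≫ 𝟙 _) (S.z A ≫ S.F.map u) ≫ S.ψ S.T B := by
        rw [Category.id_comp, Category.comp_id, S.z_nat]
    _ = prod.map S.oneT (S.z A) ≫ prod.map (𝟙 _) (S.F.map u) ≫ S.ψ S.T B := by
        rw [← Category.assoc, prod.map_map]
    _ = S.L A ≫ S.F.map (prod.map (𝟙 S.T) u) := by
        unfold L; rw [Category.assoc, h]

lemma PreSetting.ins_nat (S : PreSetting C) {A B : C} (u : A ⟶ B) :
    u ≫ S.ins B = S.ins A ≫ prod.map (𝟙 S.T) u := by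
  unfold ins
  apply Limits.prod.hom_ext
  · simp only [prod.comp_lift, Category.assoc, prod.lift_fst, prod.map_fst,
      Category.comp_id]
    rw [← Category.assoc, terminal.comp_from]
  · simp

lemma PreSetting.ins_from (S : PreSetting C) (X : C) :
    S.ins X ≫ terminal.from (S.T ⨯ X) ≫ terminal.from (⊤_ C) = 𝟙 X ≫ terminal.from X ≫ terminal.from (⊤_ C) := by
  apply terminal.hom_ext

/-- The unique map to the terminal object is a coalgebra morphism
`L ⊤ ⟶ z ⊤` (a consequence of the existence half of D8). -/
lemma ConvSetting.L_term (S : ConvSetting C) :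
    S.L (⊤_ C) ≫ S.F.map (terminal.from (S.T ⨯ ⊤_ C)) =
      terminal.from (S.T ⨯ ⊤_ C) ≫ S.z (⊤_ C) := by
  obtain ⟨γ, ⟨hγ, -⟩, -⟩ := S.d8 (𝟙 (⊤_ C))
  have hγt : γ = terminal.from _ := terminal.hom_ext _ _
  rw [← hγt]
  exact hγ

lemma ConvSetting.ins_term (S : ConvSetting C) :
    S.ins (⊤_ C) ≫ terminal.from (S.T ⨯ ⊤_ C) = 𝟙 (⊤_ C) :=
  terminal.hom_ext _ _

end Aux

/-- **Flow equilibria are coalgebraic equilibria, and conversely.** In a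
converse setting for stability, let `f : E ⟶ F E` be a coalgebra and
`φ : T ⨯ E ⟶ E` a solution flow of `f` (a `T`-flow that is a coalgebra
morphism `L_E ⟶ f`, so that `Dφ = f`).  If `x* : 1 ⟶ E` is an equilibrium
point of `φ` then `f ∘ x* = F(x*) ∘ 0₁`.  Conversely, if `f` is `T`-complete
and `f ∘ x* = F(x*) ∘ 0₁`, then `x*` is an equilibrium point of the solution
flow `∫f` of `f`. -/
theorem equilibrium_flow_iff_coalgebra {C : Type u} [Category.{v} C]
    [HasFiniteProducts C] (S : ConvSetting C)
    (hclock : S.toPreSetting.TComplete S.oneT) (hcc : S.ClockCompat)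
    {E : C} (f : E ⟶ S.F.obj E) (xs : ⊤_ C ⟶ E) :
    (∀ φ : S.T ⨯ E ⟶ E, S.IsFlow φ →
      S.toPreSetting.IsCoalgHom (S.L E) f φ →
      S.toPreSetting.deriv φ = f →
      prod.map (𝟙 S.T) xs ≫ φ = terminal.from (S.T ⨯ ⊤_ C) ≫ xs →
      xs ≫ f = S.z (⊤_ C) ≫ S.F.map xs) ∧
    (S.TComplete f → xs ≫ f = S.z (⊤_ C) ≫ S.F.map xs →
      ∀ intf : S.T ⨯ E ⟶ E,
        S.toPreSetting.IsCoalgHom (S.L E) f intf → S.ins E ≫ intf = 𝟙 E →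
        prod.map (𝟙 S.T) xs ≫ intf = terminal.from (S.T ⨯ ⊤_ C) ≫ xs) := by
  constructor
  · intro φ _ _ hderiv heq
    calc xs ≫ f
        = xs ≫ S.ins E ≫ S.L E ≫ S.F.map φ := by
          rw [← hderiv]; rfl
      _ = S.ins (⊤_ C) ≫ prod.map (𝟙 S.T) xs ≫ S.L E ≫ S.F.map φ := by
          rw [← Category.assoc, S.toPreSetting.ins_nat xs]
          simp only [Category.assoc]
      _ = S.ins (⊤_ C) ≫ S.L (⊤_ C) ≫
            S.F.map (prod.map (𝟙 S.T) xs) ≫ S.F.map φ := by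
          rw [← Category.assoc (prod.map (𝟙 S.T) xs),
            S.toPreSetting.L_nat xs, Category.assoc]
      _ = S.ins (⊤_ C) ≫ S.L (⊤_ C) ≫
            S.F.map (prod.map (𝟙 S.T) xs ≫ φ) := by
          rw [S.F.map_comp]
      _ = S.ins (⊤_ C) ≫ S.L (⊤_ C) ≫
            S.F.map (terminal.from (S.T ⨯ ⊤_ C)) ≫ S.F.map xs := by
          rw [heq, S.F.map_comp]
      _ = S.ins (⊤_ C) ≫ (S.L (⊤_ C) ≫
            S.F.map (terminal.from (S.T ⨯ ⊤_ C))) ≫ S.F.map xs := by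
          simp only [Category.assoc]
      _ = (S.ins (⊤_ C) ≫ terminal.from (S.T ⨯ ⊤_ C)) ≫
            S.z (⊤_ C) ≫ S.F.map xs := by
          rw [S.L_term]; simp only [Category.assoc]
      _ = S.z (⊤_ C) ≫ S.F.map xs := by
          rw [S.ins_term, Category.id_comp]
  · intro hTc heq intf hhom hinit
    obtain ⟨γ, -, huniq⟩ := hTc xs
    have h1 : prod.map (𝟙 S.T) xs ≫ intf = γ := by
      apply huniq
      constructor
      · show S.L (⊤_ C) ≫ S.F.map (prod.map (𝟙 S.T) xs ≫ intf) = _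
        rw [S.F.map_comp, ← Category.assoc, ← S.toPreSetting.L_nat xs,
          Category.assoc, hhom, ← Category.assoc]
      · rw [← Category.assoc, ← S.toPreSetting.ins_nat xs, Category.assoc,
          hinit, Category.comp_id]
    have h2 : terminal.from (S.T ⨯ ⊤_ C) ≫ xs = γ := by
      apply huniq
      constructor
      · show S.L (⊤_ C) ≫ S.F.map (terminal.from (S.T ⨯ ⊤_ C) ≫ xs) = _
        rw [S.F.map_comp, ← Category.assoc, S.L_term, Category.assoc, ← heq,
          ← Category.assoc]
      · rw [← Category.assoc, S.ins_term, Category.id_comp]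
    rw [h1, h2]
end

section
/- In a converse setting for stability, let f : E → FE be a T-complete coalgebra with solution flow ∫f, and let V : E → R be a morphism that is flow-decrescent: V ∘ ∫f ≤ V ∘ π_E (in the posetal structure on hom-sets into R). Then, assuming axiom D9 (F preserves the order on maps into R), V is system-decrescent: FV ∘ f ≤ 0_R ∘ V as maps E → FR. -/
open CategoryTheory CategoryTheory.Limits

universe v u

/-!
The derivative `ins ≫ L_B ≫ F φ` of a coalgebra morphism `φ : L_B ⟶ g` is `(ins ≫ φ) ≫ g`.
The solution flow `∫f` is such a morphism into `f`, and by D7 and D8 the projection `π_E` is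
one into `0_E`. Since D9 and precomposition make differentiation monotone, `∫f ≫ V ≤ π_E ≫ V`
differentiates to `f ≫ F V ≤ 0_E ≫ F V = V ≫ 0_R`.
-/

namespace PreSetting

variable {C : Type u} [Category.{v} C] [HasFiniteProducts C] {S : PreSetting C}

lemma IsCoalgHom.of_iso_hom_comp {A B D : C} {f : A ⟶ S.F.obj A}
    {g : B ⟶ S.F.obj B} {k : D ⟶ S.F.obj D} (e : A ≅ B) {q : B ⟶ D}
    (he : S.IsCoalgHom f g e.hom) (heq : S.IsCoalgHom f k (e.hom ≫ q)) :
    S.IsCoalgHom g k q := by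
  unfold IsCoalgHom at *
  calc g ≫ S.F.map q = e.inv ≫ (f ≫ S.F.map e.hom) ≫ S.F.map q := by
        rw [he, Category.assoc, Iso.inv_hom_id_assoc]
    _ = e.inv ≫ (e.hom ≫ q) ≫ k := by
        rw [Category.assoc, ← S.F.map_comp, heq]
    _ = q ≫ k := by rw [Category.assoc, Iso.inv_hom_id_assoc]

lemma IsCoalgHom.ins_L_map_comp {A B X : C} {g : A ⟶ S.F.obj A}
    {γ : S.T ⨯ B ⟶ A} (h : S.IsCoalgHom (S.L B) g γ) (W : A ⟶ X) :
    S.ins B ≫ S.L B ≫ S.F.map (γ ≫ W) = (S.ins B ≫ γ) ≫ g ≫ S.F.map W := by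
  rw [S.F.map_comp, reassoc_of% h, Category.assoc]

end PreSetting

namespace ConvSetting

variable {C : Type u} [Category.{v} C] [HasFiniteProducts C] (S : ConvSetting C)

lemma isCoalgHom_rightUnitor_hom :
    S.IsCoalgHom (S.L (⊤_ C)) S.oneT (prod.rightUnitor S.T).hom := by
  have hL : S.L (⊤_ C) =
      prod.map S.oneT (𝟙 _) ≫ prod.map (𝟙 _) (S.z (⊤_ C)) ≫ S.ψ S.T (⊤_ C) := by
    rw [PreSetting.L, prod.map_map_assoc, Category.comp_id, Category.id_comp]
  rw [PreSetting.IsCoalgHom, hL, Category.assoc, Category.assoc, S.d7_right,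
    prod.rightUnitor_hom_naturality]

lemma isCoalgHom_terminal_from :
    S.IsCoalgHom S.oneT (S.z (⊤_ C)) (terminal.from S.T) := by
  obtain ⟨γ, ⟨hγ, -⟩, -⟩ := S.d8 (𝟙 (⊤_ C))
  refine PreSetting.IsCoalgHom.of_iso_hom_comp (prod.rightUnitor S.T)
    S.isCoalgHom_rightUnitor_hom ?_
  rwa [terminal.hom_ext γ ((prod.rightUnitor S.T).hom ≫ terminal.from S.T)] at hγ

lemma isCoalgHom_snd (E : C) :
    S.IsCoalgHom (S.L E) (S.z E) (prod.snd : S.T ⨯ E ⟶ E) := by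
  have hsnd : (prod.snd : S.T ⨯ E ⟶ E) =
      prod.map (terminal.from S.T) (𝟙 E) ≫ (prod.leftUnitor E).hom := by simp
  have hclock := S.isCoalgHom_terminal_from
  unfold PreSetting.IsCoalgHom at hclock ⊢
  calc S.L E ≫ S.F.map prod.snd
      = prod.map (S.oneT ≫ S.F.map (terminal.from S.T)) (S.z E) ≫ S.ψ (⊤_ C) E ≫
          S.F.map (prod.leftUnitor E).hom := by
        rw [hsnd, PreSetting.L, S.F.map_comp, Category.assoc,
          ← reassoc_of% (S.ψ_nat (terminal.from S.T) (𝟙 E)), prod.map_map_assoc,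
          S.F.map_id, Category.comp_id]
    _ = prod.map (terminal.from S.T) (S.z E) ≫ (prod.leftUnitor (S.F.obj E)).hom := by
        rw [hclock, ← S.d7_left, prod.map_map_assoc, Category.comp_id]
    _ = prod.snd ≫ S.z E := by simp

end ConvSetting

theorem flow_decrescent_implies_system_decrescent_general {C : Type u} [Category.{v} C]
    [HasFiniteProducts C] (S : ConvSetting C) (R : C)
    [ord : ∀ A : C, PartialOrder (A ⟶ R)]
    [ordF : ∀ A : C, PartialOrder (A ⟶ S.F.obj R)]
    (hpreF : ∀ {A B : C} (w : A ⟶ B) (g h : B ⟶ S.F.obj R), g ≤ h →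
      w ≫ g ≤ w ≫ h)
    (d9 : ∀ {A : C} (g h : A ⟶ R), g ≤ h → S.F.map g ≤ S.F.map h)
    {E : C} (f : E ⟶ S.F.obj E)
    (intf : S.T ⨯ E ⟶ E)
    (hsol : S.toPreSetting.IsCoalgHom (S.L E) f intf ∧ S.ins E ≫ intf = 𝟙 E)
    (V : E ⟶ R)
    (hdecr : intf ≫ V ≤ (prod.snd : S.T ⨯ E ⟶ E) ≫ V) :
    f ≫ S.F.map V ≤ V ≫ S.z R := by
  obtain ⟨hcoalg, hinit⟩ := hsol
  have hmono : S.ins E ≫ S.L E ≫ S.F.map (intf ≫ V) ≤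
      S.ins E ≫ S.L E ≫ S.F.map ((prod.snd : S.T ⨯ E ⟶ E) ≫ V) := by
    simpa only [Category.assoc] using hpreF (S.ins E ≫ S.L E) _ _ (d9 _ _ hdecr)
  calc f ≫ S.F.map V = S.ins E ≫ S.L E ≫ S.F.map (intf ≫ V) := by
        rw [PreSetting.IsCoalgHom.ins_L_map_comp hcoalg, hinit, Category.id_comp]
    _ ≤ S.ins E ≫ S.L E ≫ S.F.map ((prod.snd : S.T ⨯ E ⟶ E) ≫ V) := hmono
    _ = V ≫ S.z R := by
        rw [PreSetting.IsCoalgHom.ins_L_map_comp (S.isCoalgHom_snd E), PreSetting.ins,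
          prod.lift_snd, Category.id_comp, S.z_nat]

/-- **Flow-decrescent implies system-decrescent.** In a converse setting for
stability with a posetal object `R` (hom-sets into `R` and into `F R` are
partially ordered, with precomposition monotone), let `f : E ⟶ F E` be a
`T`-complete coalgebra with solution flow `∫f`, and `V : E ⟶ R`.  If `V` is
flow-decrescent (`V ∘ ∫f ≤ V ∘ π_E`) then, assuming axiom D9 (`F` preserves
the order on maps into `R`), `V` is system-decrescent: `F V ∘ f ≤ 0_R ∘ V`. -/
theorem flow_decrescent_implies_system_decrescent {C : Type u} [Category.{v} C]
    [HasFiniteProducts C] (S : ConvSetting C) (R : C)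
    [ord : ∀ A : C, PartialOrder (A ⟶ R)]
    [ordF : ∀ A : C, PartialOrder (A ⟶ S.F.obj R)]
    (hpre : ∀ {A B : C} (w : A ⟶ B) (g h : B ⟶ R), g ≤ h → w ≫ g ≤ w ≫ h)
    (hpreF : ∀ {A B : C} (w : A ⟶ B) (g h : B ⟶ S.F.obj R), g ≤ h →
      w ≫ g ≤ w ≫ h)
    (d9 : ∀ {A : C} (g h : A ⟶ R), g ≤ h → S.F.map g ≤ S.F.map h)
    (hclock : S.toPreSetting.TComplete S.oneT) (hcc : S.ClockCompat)
    {E : C} (f : E ⟶ S.F.obj E) (hf : S.TComplete f)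
    (intf : S.T ⨯ E ⟶ E)
    (hsol : S.toPreSetting.IsCoalgHom (S.L E) f intf ∧ S.ins E ≫ intf = 𝟙 E)
    (V : E ⟶ R)
    (hdecr : intf ≫ V ≤ (prod.snd : S.T ⨯ E ⟶ E) ≫ V) :
    f ≫ S.F.map V ≤ V ≫ S.z R :=
  flow_decrescent_implies_system_decrescent_general S R (ord := ord) (ordF := ordF) hpreF d9 f intf
    hsol V hdecr
end
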